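/- Let R be the valuation ring of a Henselian valued field, m its maximal ideal, and p = (p_{r+1},…,p_n) as in the implicit function theorem with e ≠ 0. Then any point x ∈ V = {x ∈ Rⁿ : p(x) = 0} with first r coordinates in e²·m and last n−r coordinates in e·m satisfies x = (u, φ(u)) where u is the tuple of first r coordinates; that is, the implicit function φ is unique on its domain. -/

import Mathlib

/-!
Let `y = (u, φ u)` and `x` be two zeros of `p` with the same first block, and write
`y - x = (0, e • τ)` with `τ` in the maximal ideal `m`; let `T` be the ideal spanned by the `τ j`.
Taylor expansion of `p` at `x` puts `J(x) (y - x)` in `(e T)²`, where `J` is the partial Jacobian in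
the last variables, and multiplying by the adjugate gives `det J(x) · e τ j ∈ e² T²`. As
`x ≡ 0 mod e m`, `det J(x) ≡ det J(0) = e mod e m`, so `det J(x)` is `e` times a unit; cancelling
`e²` yields `T ≤ T²`, and Nakayama's lemma forces `T = 0`, i.e. `x = y`.
-/

open MvPolynomial IsLocalRing Matrix

namespace Matrix

variable {R n : Type*} [CommRing R] [Fintype n] [DecidableEq n]

theorem det_sub_det_mem_of_forall_sub_mem {I : Ideal R} {A B : Matrix n n R}
    (h : ∀ i j, A i j - B i j ∈ I) : A.det - B.det ∈ I := by
  rw [← Ideal.Quotient.eq, RingHom.map_det, RingHom.map_det]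
  congr 1
  ext i j
  exact Ideal.Quotient.eq.mpr (h i j)

theorem det_mul_mem_of_forall_mulVec_mem {I : Ideal R} {A : Matrix n n R} {v : n → R}
    (h : ∀ i, (A *ᵥ v) i ∈ I) (j : n) : A.det * v j ∈ I := by
  have hadj : A.det • v = A.adjugate *ᵥ (A *ᵥ v) := by
    rw [mulVec_mulVec, adjugate_mul, smul_mulVec, one_mulVec]
  rw [← smul_eq_mul, ← Pi.smul_apply, hadj]
  exact Ideal.sum_mem _ fun k _ => Ideal.mul_mem_left _ _ (h k)

end Matrix

namespace IsLocalRing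

theorem eq_zero_of_forall_mem_span_range_sq {R ι : Type*} [CommRing R] [IsLocalRing R]
    [Finite ι] {τ : ι → R} (hτ : ∀ i, τ i ∈ maximalIdeal R)
    (h : ∀ i, τ i ∈ Ideal.span (Set.range τ) ^ 2) : τ = 0 := by
  have hbot : Ideal.span (Set.range τ) = ⊥ := by
    refine Submodule.eq_bot_of_le_smul_of_le_jacobson_bot (Ideal.span (Set.range τ)) _
      (Submodule.fg_span (Set.finite_range τ)) ?_ ?_
    · rw [Ideal.span_le]
      rintro _ ⟨i, rfl⟩
      simpa [sq] using h i
    · rw [Ideal.span_le, Ideal.jacobson_bot, ringJacobson_eq_maximalIdeal]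
      rintro _ ⟨i, rfl⟩
      exact hτ i
  funext i
  exact Ideal.span_eq_bot.mp hbot _ (Set.mem_range_self i)

end IsLocalRing

namespace MvPolynomial

section CommRing

variable {R : Type*} [CommRing R]

theorem eval_sub_eval_mem_of_forall_sub_mem {σ : Type*} {I : Ideal R} {x y : σ → R}
    (h : ∀ τ, x τ - y τ ∈ I) (q : MvPolynomial σ R) : eval x q - eval y q ∈ I := by
  rw [← Ideal.Quotient.eq, eval₂_comp, eval₂_comp]
  congr 1
  funext τ
  exact Ideal.Quotient.eq.mpr (h τ)

theorem eval_add_sub_eval_sub_sum_pderiv_mem_sq {σ : Type*} [Fintype σ] [DecidableEq σ]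
    {I : Ideal R} (x : σ → R) {d : σ → R} (hd : ∀ τ, d τ ∈ I) (q : MvPolynomial σ R) :
    eval (x + d) q - eval x q - ∑ τ, eval x (pderiv τ q) * d τ ∈ I ^ 2 := by
  induction q using MvPolynomial.induction_on with
  | C a => simp
  | add q₁ q₂ h₁ h₂ =>
    convert Ideal.add_mem _ h₁ h₂ using 1
    simp only [map_add, add_mul, Finset.sum_add_distrib]
    ring
  | mul_X q n h =>
    have hlin : ∑ τ, eval x (pderiv τ q) * d τ ∈ I :=
      Ideal.sum_mem _ fun τ _ => Ideal.mul_mem_left _ _ (hd τ)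
    have hsq : d n * ∑ τ, eval x (pderiv τ q) * d τ ∈ I ^ 2 := by
      rw [sq]
      exact Ideal.mul_mem_mul (hd n) hlin
    have hsum : ∑ τ, eval x (pderiv τ (q * X n)) * d τ
        = (∑ τ, eval x (pderiv τ q) * d τ) * x n + eval x q * d n := by
      simp only [pderiv_mul, pderiv_X, map_add, map_mul, eval_X, Pi.single_apply,
        apply_ite (eval x), map_zero, mul_ite, mul_one, mul_zero, ite_mul, zero_mul,
        add_mul, Finset.sum_add_distrib, Finset.sum_ite_eq, Finset.mem_univ, if_true,
        Finset.sum_mul, mul_right_comm _ (x n)]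
    convert Ideal.add_mem _ (Ideal.mul_mem_left _ (x n + d n) h) hsq using 1
    rw [hsum]
    simp only [map_mul, eval_X, Pi.add_apply]
    ring

variable {ι κ : Type*}

noncomputable def partialJacobian (p : κ → MvPolynomial (ι ⊕ κ) R) (x : ι ⊕ κ → R) :
    Matrix κ κ R :=
  Matrix.of fun i j => eval x (pderiv (Sum.inr j) (p i))

theorem det_partialJacobian_sub_mem_span_range [Fintype κ] [DecidableEq κ]
    (p : κ → MvPolynomial (ι ⊕ κ) R) (x : ι ⊕ κ → R) :
    (partialJacobian p x).det - (partialJacobian p 0).det ∈ Ideal.span (Set.range x) :=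
  det_sub_det_mem_of_forall_sub_mem fun _ _ =>
    eval_sub_eval_mem_of_forall_sub_mem
      (fun τ => by simpa using Ideal.subset_span (Set.mem_range_self τ)) _

theorem partialJacobian_mulVec_mem_sq [Fintype ι] [Fintype κ] [DecidableEq ι] [DecidableEq κ]
    {p : κ → MvPolynomial (ι ⊕ κ) R} {I : Ideal R} {x y : ι ⊕ κ → R}
    (hpx : ∀ i, eval x (p i) = 0) (hpy : ∀ i, eval y (p i) = 0)
    (hinl : ∀ i, y (Sum.inl i) = x (Sum.inl i)) (hinr : ∀ j, y (Sum.inr j) - x (Sum.inr j) ∈ I)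
    (i : κ) : (partialJacobian p x *ᵥ fun j => y (Sum.inr j) - x (Sum.inr j)) i ∈ I ^ 2 := by
  have hd : ∀ σ, (y - x) σ ∈ I := by
    rintro (k | j)
    · simp [hinl k]
    · exact hinr j
  have h := neg_mem (eval_add_sub_eval_sub_sum_pderiv_mem_sq x hd (p i))
  rw [add_sub_cancel, hpx, hpy, Fintype.sum_sum_type] at h
  simpa [hinl, partialJacobian, Matrix.mulVec, dotProduct] using h

end CommRing

theorem eq_of_eval_eq_zero_of_mem_span_det_mul_maximalIdeal {R ι κ : Type*} [CommRing R]
    [IsDomain R] [IsLocalRing R] [Fintype ι] [Fintype κ] [DecidableEq ι] [DecidableEq κ]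
    {p : κ → MvPolynomial (ι ⊕ κ) R} (hne : (partialJacobian p 0).det ≠ 0) {x y : ι ⊕ κ → R}
    (hx : ∀ σ, x σ ∈ Ideal.span {(partialJacobian p 0).det} * maximalIdeal R)
    (hinl : ∀ i, y (Sum.inl i) = x (Sum.inl i))
    (hinr : ∀ j, y (Sum.inr j) - x (Sum.inr j) ∈
      Ideal.span {(partialJacobian p 0).det} * maximalIdeal R)
    (hpx : ∀ i, eval x (p i) = 0) (hpy : ∀ i, eval y (p i) = 0) : x = y := by
  set e := (partialJacobian p 0).det
  choose τ hτm hτ using fun j => Ideal.mem_span_singleton_mul.mp (hinr j)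
  set T := Ideal.span (Set.range τ)
  have hlin := partialJacobian_mulVec_mem_sq (I := Ideal.span {e} * T) hpx hpy hinl
    fun j => hτ j ▸ Ideal.mul_mem_mul (Ideal.mem_span_singleton_self e)
      (Ideal.subset_span (Set.mem_range_self j))
  obtain ⟨μ, hμ, hμe⟩ := Ideal.mem_span_singleton_mul.mp
    (Ideal.span_le.mpr (Set.range_subset_iff.mpr hx) (det_partialJacobian_sub_mem_span_range p x))
  have hunit : IsUnit (1 + μ) := by
    simpa using isUnit_one_sub_self_of_mem_nonunits (-μ) (neg_mem hμ)
  have hτT : ∀ j, τ j ∈ T ^ 2 := by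
    intro j
    have h := det_mul_mem_of_forall_mulVec_mem hlin j
    rw [← hτ j, mul_pow, Ideal.span_singleton_pow,
      show (partialJacobian p x).det = e * (1 + μ) by linear_combination -hμe] at h
    obtain ⟨z, hz, hze⟩ := Ideal.mem_span_singleton_mul.mp h
    have hz_eq : z = (1 + μ) * τ j := mul_left_cancel₀ (pow_ne_zero 2 hne) (by rw [hze]; ring)
    exact (Ideal.unit_mul_mem_iff_mem _ hunit).mp (hz_eq ▸ hz)
  have hτ0 := eq_zero_of_forall_mem_span_range_sq hτm hτT
  funext σ
  rcases σ with i | j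
  · exact (hinl i).symm
  · rw [← sub_eq_zero, ← neg_sub, ← hτ j, hτ0, Pi.zero_apply, mul_zero, neg_zero]

end MvPolynomial

theorem implicit_function_uniqueness_general
    {K : Type*} [Field K] {Γ : Type*} [LinearOrderedCommGroupWithZero Γ]
    [Valued K Γ]
    {r s : ℕ}
    (p : Fin s → MvPolynomial (Fin r ⊕ Fin s) ((Valued.v : Valuation K Γ).valuationSubring))
    (e : ((Valued.v : Valuation K Γ).valuationSubring))
    (he : e = (Matrix.of fun i j => eval 0 (pderiv (Sum.inr j) (p i))).det)
    (hne : e ≠ 0)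
    (φ : (Fin r → ((Valued.v : Valuation K Γ).valuationSubring)) →
         (Fin s → ((Valued.v : Valuation K Γ).valuationSubring)))
    (hφm : ∀ u, (∀ i, ∃ t ∈ maximalIdeal _, u i = e ^ 2 * t) →
      ∀ j, ∃ t ∈ maximalIdeal _, φ u j = e * t)
    (hφgraph : ∀ u, (∀ i, ∃ t ∈ maximalIdeal _, u i = e ^ 2 * t) →
      ∀ i, eval (Sum.elim u (φ u)) (p i) = 0) :
    ∀ x : Fin r ⊕ Fin s → ((Valued.v : Valuation K Γ).valuationSubring),
      (∀ i, ∃ t ∈ maximalIdeal _, x (Sum.inl i) = e ^ 2 * t) →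
      (∀ j, ∃ t ∈ maximalIdeal _, x (Sum.inr j) = e * t) →
      (∀ i, eval x (p i) = 0) →
      ∀ j, x (Sum.inr j) = φ (fun i => x (Sum.inl i)) j := by
  intro x hxl hxr hpx j
  obtain rfl : e = (partialJacobian p 0).det := he
  set u := fun i => x (Sum.inl i)
  choose t ht hxt using hxr
  choose t' ht' hφt using hφm u hxl
  have hx : ∀ σ, x σ ∈ Ideal.span {(partialJacobian p 0).det} * maximalIdeal _ := by
    rintro (i | j)
    · obtain ⟨w, hw, hxw⟩ := hxl i
      exact Ideal.mem_span_singleton_mul.mpr ⟨_, Ideal.mul_mem_left _ _ hw, by rw [hxw]; ring⟩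
    · exact Ideal.mem_span_singleton_mul.mpr ⟨t j, ht j, (hxt j).symm⟩
  have hxy := eq_of_eval_eq_zero_of_mem_span_det_mul_maximalIdeal hne hx (y := Sum.elim u (φ u))
    (fun _ => rfl)
    (fun j => Ideal.mem_span_singleton_mul.mpr
      ⟨t' j - t j, sub_mem (ht' j) (ht j), by simp [hxt, hφt, mul_sub]⟩)
    hpx (hφgraph u hxl)
  exact congrFun hxy (Sum.inr j)

/-- uniqueness of the implicit function. Any point `x` of the zero
locus `V` whose first `r` coordinates lie in `e²·m` and last `s` coordinates lie
in `e·m` is on the graph of `φ`. -/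
theorem implicit_function_uniqueness
    {K : Type*} [Field K] {Γ : Type*} [LinearOrderedCommGroupWithZero Γ]
    [Valued K Γ]
    [HenselianLocalRing ((Valued.v : Valuation K Γ).valuationSubring)]
    {r s : ℕ} (hs : 0 < s)
    (p : Fin s → MvPolynomial (Fin r ⊕ Fin s) ((Valued.v : Valuation K Γ).valuationSubring))
    (hp0 : ∀ i, eval 0 (p i) = 0)
    (e : ((Valued.v : Valuation K Γ).valuationSubring))
    (he : e = (Matrix.of fun i j => eval 0 (pderiv (Sum.inr j) (p i))).det)
    (hne : e ≠ 0)
    (φ : (Fin r → ((Valued.v : Valuation K Γ).valuationSubring)) →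
         (Fin s → ((Valued.v : Valuation K Γ).valuationSubring)))
    (hφcont : ContinuousOn φ {u | ∀ i, ∃ t ∈ maximalIdeal _, u i = e ^ 2 * t})
    (hφ0 : φ 0 = 0)
    (hφm : ∀ u, (∀ i, ∃ t ∈ maximalIdeal _, u i = e ^ 2 * t) →
      ∀ j, ∃ t ∈ maximalIdeal _, φ u j = e * t)
    (hφgraph : ∀ u, (∀ i, ∃ t ∈ maximalIdeal _, u i = e ^ 2 * t) →
      ∀ i, eval (Sum.elim u (φ u)) (p i) = 0) :
    ∀ x : Fin r ⊕ Fin s → ((Valued.v : Valuation K Γ).valuationSubring),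
      (∀ i, ∃ t ∈ maximalIdeal _, x (Sum.inl i) = e ^ 2 * t) →
      (∀ j, ∃ t ∈ maximalIdeal _, x (Sum.inr j) = e * t) →
      (∀ i, eval x (p i) = 0) →
      ∀ j, x (Sum.inr j) = φ (fun i => x (Sum.inl i)) j :=
  implicit_function_uniqueness_general p e he hne φ hφm hφgraph
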